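/- arXiv:math/0312524 — 2 statements merged into one kernel-verified Lean document; each statement's English description precedes it below -/
import Mathlib

section
/- Let V be a graded Lie algebra of degree n over a commutative ring R with 2 invertible, and let D be a differential of odd degree k on V. Then the derived bracket [a,b]_{(D)} := (-1)^{n+|a|+1}[Da,b] is a Loday bracket of degree n+k, i.e., it is R-bilinear, sends V_i × V_j into V_{i+j+n+k}, and for all homogeneous a,b,c it satisfies the graded Jacobi identity [a,[b,c]_{(D)}]_{(D)} = [[a,b]_{(D)},c]_{(D)} + (-1)^{(n+k+|a|)(n+k+|b|)}[b,[a,c]_{(D)}]_{(D)}. -/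
/-- `(-1)^m` as an integer, for `m : ℤ` (depends only on the parity of `m`). -/
def gsign (m : ℤ) : ℤ := (((-1 : ℤˣ) ^ m : ℤˣ) : ℤ)

/-- A graded Lie algebra of degree `n` over a commutative ring `R`: a `ℤ`-graded
`R`-module with an `R`-bilinear bracket sending `V_i × V_j` into `V_{i+j+n}`,
graded skew-symmetric and satisfying the graded Jacobi identity. -/
structure GradedLieAlgebraOfDegree (R : Type*) [CommRing R] (V : Type*) [AddCommGroup V] [Module R V]
    (n : ℤ) where
  grade : ℤ → Submodule R V
  bracket : V →ₗ[R] V →ₗ[R] V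
  bracket_mem : ∀ i j : ℤ, ∀ a ∈ grade i, ∀ b ∈ grade j, bracket a b ∈ grade (i + j + n)
  skew : ∀ i j : ℤ, ∀ a ∈ grade i, ∀ b ∈ grade j,
    bracket a b = - (gsign ((n + i) * (n + j)) • bracket b a)
  jacobi : ∀ i j l : ℤ, ∀ a ∈ grade i, ∀ b ∈ grade j, ∀ c ∈ grade l,
    bracket a (bracket b c)
      = bracket (bracket a b) c + gsign ((n + i) * (n + j)) • bracket b (bracket a c)

/-- `D` is a differential of odd degree `k` on the graded Lie algebra `L`:
homogeneous of odd degree `k`, of square zero, and a graded derivation of the bracket. -/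
structure GradedLieAlgebraOfDegree.IsDifferential {R : Type*} [CommRing R] {V : Type*} [AddCommGroup V]
    [Module R V] {n : ℤ} (L : GradedLieAlgebraOfDegree R V n) (D : V →ₗ[R] V) (k : ℤ) : Prop where
  odd : Odd k
  map_mem : ∀ i : ℤ, ∀ a ∈ L.grade i, D a ∈ L.grade (i + k)
  sq_zero : ∀ a : V, D (D a) = 0
  leibniz : ∀ i j : ℤ, ∀ a ∈ L.grade i, ∀ b ∈ L.grade j,
    D (L.bracket a b) = L.bracket (D a) b + gsign (k * (n + i)) • L.bracket a (D b)

/-- The derived bracket `[a,b]_{(D)} = (-1)^{n+|a|+1} • [D a, b]`, for `a` homogeneous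
of degree `i`. -/
def GradedLieAlgebraOfDegree.der {R : Type*} [CommRing R] {V : Type*} [AddCommGroup V] [Module R V]
    {n : ℤ} (L : GradedLieAlgebraOfDegree R V n) (D : V →ₗ[R] V) (i : ℤ) (a b : V) : V :=
  gsign (n + i + 1) • L.bracket (D a) b

/-- The derived bracket `[a,b]_d = [[a,d],b]` by an element `d`. -/
def GradedLieAlgebraOfDegree.derEl {R : Type*} [CommRing R] {V : Type*} [AddCommGroup V] [Module R V]
    {n : ℤ} (L : GradedLieAlgebraOfDegree R V n) (d : V) (a b : V) : V :=
  L.bracket (L.bracket a d) b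

lemma gsign_add (a b : ℤ) : gsign (a + b) = gsign a * gsign b := by
  simp [gsign, zpow_add]

lemma gsign_two_mul (t : ℤ) : gsign (2 * t) = 1 := by
  have h2 : ((-1 : ℤˣ) ^ (2 : ℤ)) = 1 := by
    rw [show (2:ℤ) = ((2:ℕ):ℤ) by norm_num, zpow_natCast]
    decide
  rw [gsign, zpow_mul, h2, one_zpow]
  rfl

lemma gsign_eq_of_even_sub {a b : ℤ} (h : Even (a - b)) : gsign a = gsign b := by
  obtain ⟨t, ht⟩ := h
  have : a = b + 2 * t := by linarith
  rw [this, gsign_add, gsign_two_mul, mul_one]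

/-- the derived bracket of a graded Lie bracket of degree `n` by a
differential of odd degree `k` is a Loday bracket of degree `n + k`:
it is `R`-bilinear, sends `grade i × grade j` into `grade (i+j+n+k)`, and
satisfies the graded Jacobi identity with the shifted degree. -/
theorem derived_bracket_is_loday {R : Type*} [CommRing R] [Invertible (2 : R)]
    {V : Type*} [AddCommGroup V] [Module R V] {n k : ℤ}
    (L : GradedLieAlgebraOfDegree R V n) (D : V →ₗ[R] V) (hD : L.IsDifferential D k) :
    (∀ (i : ℤ) (r : R) (a a' b : V),
        L.der D i (r • a + a') b = r • L.der D i a b + L.der D i a' b) ∧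
    (∀ (i : ℤ) (r : R) (a b b' : V),
        L.der D i a (r • b + b') = r • L.der D i a b + L.der D i a b') ∧
    (∀ i j : ℤ, ∀ a ∈ L.grade i, ∀ b ∈ L.grade j,
        L.der D i a b ∈ L.grade (i + j + (n + k))) ∧
    (∀ i j l : ℤ, ∀ a ∈ L.grade i, ∀ b ∈ L.grade j, ∀ c ∈ L.grade l,
        L.der D i a (L.der D j b c)
          = L.der D (i + j + (n + k)) (L.der D i a b) c
            + gsign ((n + k + i) * (n + k + j)) • L.der D j b (L.der D i a c)) := by
  
  obtain ⟨t, ht⟩ := hD.odd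
  refine ⟨?_, ?_, ?_, ?_⟩
  · intro i r a a' b
    simp only [GradedLieAlgebraOfDegree.der, map_add, map_smul, LinearMap.add_apply,
      LinearMap.smul_apply, smul_add]
    rw [smul_comm]
  · intro i r a b b'
    simp only [GradedLieAlgebraOfDegree.der, map_add, map_smul, smul_add]
    rw [smul_comm]
  · intro i j a ha b hb
    have h := L.bracket_mem (i + k) j _ (hD.map_mem i a ha) b hb
    have he : i + k + j + n = i + j + (n + k) := by ring
    rw [he] at h
    exact Submodule.smul_of_tower_mem _ _ h
  · intro i j l a ha b hb c hc
    have hDa := hD.map_mem i a ha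
    have hDb := hD.map_mem j b hb
    have hjac := L.jacobi (i + k) (j + k) l (D a) hDa (D b) hDb c hc
    have hleib := hD.leibniz (i + k) j (D a) hDa b hb
    simp only [GradedLieAlgebraOfDegree.der, map_zsmul, map_smul, LinearMap.smul_apply, hD.sq_zero,
      map_zero, LinearMap.zero_apply, zero_add] at *
    rw [hjac, hleib]
    simp only [map_add, map_zsmul, map_smul, LinearMap.add_apply, LinearMap.smul_apply, smul_add]
    match_scalars
    · simp only [mul_one, ← gsign_add]
      apply gsign_eq_of_even_sub
      exact ⟨-((t + 1) * (n + i + k)), by subst ht; ring⟩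
    · simp only [mul_one, ← gsign_add]
      congr 1
      ring
end

section
/- Let R be a commutative ring with 2 invertible, V a graded Lie algebra of degree n over R, μ ∈ V homogeneous with n+|μ| odd and [μ,μ] = 0, and r ∈ V homogeneous with n+|r| even. Then [[μ,r],[μ,r]] = [μ,[[r,μ],r]]. (In the big-bracket formulation of Lie bialgebras, with μ a Lie algebra structure and r a candidate r-matrix, this identity shows that d_μ r := [μ,r] defines a Lie cobracket, i.e., [d_μ r, d_μ r] = 0, if and only if the algebraic Schouten bracket [r,r]_μ = [[r,μ],r] is annihilated by d_μ, i.e., is ad-invariant — the generalized classical Yang–Baxter equation.) -/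
/-- A graded Lie algebra of degree `n` over a commutative ring `R`: a `ℤ`-graded
`R`-module with an `R`-bilinear bracket sending `V_i × V_j` into `V_{i+j+n}`,
graded skew-symmetric and satisfying the graded Jacobi identity. -/
structure GradedLieAlgebraDeg (R : Type*) [CommRing R] (V : Type*) [AddCommGroup V] [Module R V]
    (n : ℤ) where
  grade : ℤ → Submodule R V
  bracket : V →ₗ[R] V →ₗ[R] V
  bracket_mem : ∀ i j : ℤ, ∀ a ∈ grade i, ∀ b ∈ grade j, bracket a b ∈ grade (i + j + n)
  skew : ∀ i j : ℤ, ∀ a ∈ grade i, ∀ b ∈ grade j,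
    bracket a b = - (gsign ((n + i) * (n + j)) • bracket b a)
  jacobi : ∀ i j l : ℤ, ∀ a ∈ grade i, ∀ b ∈ grade j, ∀ c ∈ grade l,
    bracket a (bracket b c)
      = bracket (bracket a b) c + gsign ((n + i) * (n + j)) • bracket b (bracket a c)

/-- `D` is a differential of odd degree `k` on the graded Lie algebra `L`:
homogeneous of odd degree `k`, of square zero, and a graded derivation of the bracket. -/
structure GradedLieAlgebraDeg.IsDifferential {R : Type*} [CommRing R] {V : Type*} [AddCommGroup V]
    [Module R V] {n : ℤ} (L : GradedLieAlgebraDeg R V n) (D : V →ₗ[R] V) (k : ℤ) : Prop where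
  odd : Odd k
  map_mem : ∀ i : ℤ, ∀ a ∈ L.grade i, D a ∈ L.grade (i + k)
  sq_zero : ∀ a : V, D (D a) = 0
  leibniz : ∀ i j : ℤ, ∀ a ∈ L.grade i, ∀ b ∈ L.grade j,
    D (L.bracket a b) = L.bracket (D a) b + gsign (k * (n + i)) • L.bracket a (D b)

/-- The derived bracket `[a,b]_{(D)} = (-1)^{n+|a|+1} • [D a, b]`, for `a` homogeneous
of degree `i`. -/
def GradedLieAlgebraDeg.der {R : Type*} [CommRing R] {V : Type*} [AddCommGroup V] [Module R V]
    {n : ℤ} (L : GradedLieAlgebraDeg R V n) (D : V →ₗ[R] V) (i : ℤ) (a b : V) : V :=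
  gsign (n + i + 1) • L.bracket (D a) b

/-- The derived bracket `[a,b]_d = [[a,d],b]` by an element `d`. -/
def GradedLieAlgebraDeg.derEl {R : Type*} [CommRing R] {V : Type*} [AddCommGroup V] [Module R V]
    {n : ℤ} (L : GradedLieAlgebraDeg R V n) (d : V) (a b : V) : V :=
  L.bracket (L.bracket a d) b

/-- for `μ` homogeneous with `n + |μ|` odd and `[μ,μ] = 0`, and `r`
homogeneous with `n + |r|` even, one has `[[μ,r],[μ,r]] = [μ,[[r,μ],r]]`: the
coboundary `d_μ r = [μ,r]` is of square zero iff the algebraic Schouten bracket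
`[r,r]_μ = [[r,μ],r]` is `d_μ`-closed (the generalized classical Yang–Baxter
equation). -/
theorem coboundary_lie_bialgebra_criterion {R : Type*} [CommRing R]
    [Invertible (2 : R)] {V : Type*} [AddCommGroup V] [Module R V] {n : ℤ}
    (L : GradedLieAlgebraDeg R V n)
    (μ : V) (dm : ℤ) (hμ : μ ∈ L.grade dm) (hodd : Odd (n + dm))
    (hμμ : L.bracket μ μ = 0)
    (r : V) (dr : ℤ) (hr : r ∈ L.grade dr) (heven : Even (n + dr)) :
    L.bracket (L.bracket μ r) (L.bracket μ r)
      = L.bracket μ (L.bracket (L.bracket r μ) r) := by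
  have gsign_odd : ∀ m : ℤ, Odd m → gsign m = -1 := by
    intro m hm
    obtain ⟨k, rfl⟩ := hm
    simp [gsign, zpow_add, zpow_mul, zpow_two]
  have gsign_even : ∀ m : ℤ, Even m → gsign m = 1 := by
    intro m hm
    obtain ⟨k, rfl⟩ := hm
    have : k + k = 2 * k := by ring
    simp [gsign, this, zpow_mul, zpow_two]
  set s := L.bracket μ r with hs
  -- [μ, s] = 0
  have hμs : L.bracket μ s = 0 := by
    have hj := L.jacobi dm dm dr μ hμ μ hμ r hr
    rw [hμμ, gsign_odd _ (hodd.mul hodd)] at hj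
    simp only [map_zero, LinearMap.zero_apply, zero_add, neg_one_smul] at hj
    have h2 : (2 : R) • L.bracket μ s = 0 := by
      rw [two_smul]
      nth_rewrite 2 [hj]
      exact add_neg_cancel _
    calc L.bracket μ s = ⅟(2:R) • ((2:R) • L.bracket μ s) := (invOf_smul_smul _ _).symm
      _ = 0 := by rw [h2, smul_zero]
  -- [r, μ] = -s
  have hrμ : L.bracket r μ = -s := by
    have := L.skew dr dm r hr μ hμ
    rw [gsign_even _ (heven.mul_right _), one_smul] at this
    exact this
  -- [s, μ] = 0
  have hsμ : L.bracket s μ = 0 := by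
    have hj := L.jacobi dm dr dm μ hμ r hr μ hμ
    rw [hμμ, hrμ] at hj
    simp only [map_neg, LinearMap.neg_apply, map_zero, smul_zero, add_zero, hμs, neg_zero] at hj
    exact hj.symm
  -- main Jacobi
  have hsmem : s ∈ L.grade (dm + dr + n) := L.bracket_mem dm dr μ hμ r hr
  have hj := L.jacobi (dm + dr + n) dm dr s hsmem μ hμ r hr
  have hparity : Odd ((n + (dm + dr + n)) * (n + dm)) := by
    have h1 : Odd (n + (dm + dr + n)) := by
      have : n + (dm + dr + n) = (n + dm) + (n + dr) := by ring
      rw [this]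
      exact hodd.add_even heven
    exact h1.mul hodd
  rw [hsμ, gsign_odd _ hparity] at hj
  simp only [map_zero, LinearMap.zero_apply, zero_add, neg_one_smul] at hj
  rw [hrμ]
  simp only [map_neg, LinearMap.neg_apply]
  rw [← hj]
end
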